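/- Let α > 0 and define, for z ∈ ℂ, the function ψ_α(z) := (1/2)·log(2α/(1+z+√((1+z)²+4α²))) (the derivative χ_α' of χ_α). Then for every z ∈ ℂ not of the form −1 + iy with y ∈ ℝ and |y| ≥ 2α, the function ψ_α is complex differentiable at z with derivative ψ_α'(z) = −1/(2·√((1+z)²+4α²)), and moreover Re(−1/(2·√((1+z)²+4α²))) < 0. -/

import Mathlib

open Complex

/-- The principal branch of the complex square root. -/
noncomputable def csqrt (z : ℂ) : ℂ := z ^ (1 / 2 : ℂ)

/-- `ψ_α(z) := (1/2)·log(2α/(1+z+√((1+z)²+4α²)))`, the derivative `χ_α'` of `χ_α`. -/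
noncomputable def psiFun (α : ℝ) (z : ℂ) : ℂ :=
  (1 / 2 : ℂ) * Complex.log (2 * (α : ℂ) / (1 + z + csqrt ((1 + z) ^ 2 + 4 * (α : ℂ) ^ 2)))

/-!
With `w = 1 + z` and `s = √(w² + 4α²)`, the hypothesis on `z` says exactly that `w² + 4α²` lies
off the cut `(-∞, 0]`, so `s` is holomorphic there with `s' = w / s` and `Re s > 0`. Then
`(w + s)' = (w + s) / s`, so `log (2α / (w + s))` has derivative `-1 / s`. For the logarithm to be
holomorphic, `w + s` must avoid the cut too: if `w + s = v ≤ 0`, squaring `s = v - w` gives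
`2 v s = v² + 4α² > 0`, which is impossible for `Re s > 0`.
-/

namespace Complex

lemma csqrt_eq_sqrt : csqrt = sqrt := by
  funext x
  rw [csqrt, sqrt, one_div]

lemma sqrt_sq (x : ℂ) : sqrt x ^ 2 = x :=
  cpow_ofNat_inv_pow x 2

lemma re_sqrt_pos {x : ℂ} (hx : x ∈ slitPlane) : 0 < (sqrt x).re := by
  rw [sqrt, cpow_inv_two_re, Real.sqrt_pos]
  rcases mem_slitPlane_iff.1 hx with hre | him
  · linarith [norm_nonneg x]
  · linarith [abs_re_lt_norm.2 him, neg_abs_le x.re]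

lemma inv_re_pos {x : ℂ} (hx : 0 < x.re) : 0 < x⁻¹.re := by
  rw [inv_re]
  exact div_pos hx (normSq_pos.2 (ne_zero_of_re_pos hx))

lemma hasDerivAt_sqrt' {x : ℂ} (hx : x ∈ slitPlane) :
    HasDerivAt sqrt (1 / (2 * sqrt x)) x := by
  convert hasDerivAt_sqrt hx using 1
  rw [show (-1 / 2 : ℂ) = -2⁻¹ by norm_num, cpow_neg, sqrt]
  ring

lemma ofReal_div_mem_slitPlane {a : ℝ} (ha : 0 < a) {v : ℂ} (hv : v ∈ slitPlane) :
    (a : ℂ) / v ∈ slitPlane := by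
  have hn : 0 < normSq v := normSq_pos.2 (slitPlane_ne_zero hv)
  rw [mem_slitPlane_iff] at hv ⊢
  rw [div_eq_mul_inv, re_ofReal_mul, im_ofReal_mul, inv_re, inv_im]
  rcases hv with h | h
  · left
    positivity
  · right
    simp [ha.ne', hn.ne', h]

lemma sq_add_ofReal_mem_slitPlane {w : ℂ} {c : ℝ} (hc : 0 ≤ c) (h : w.re = 0 → w.im ^ 2 < c) :
    w ^ 2 + c ∈ slitPlane := by
  have hre : (w ^ 2 + c).re = w.re ^ 2 - w.im ^ 2 + c := by simp [sq]
  have him : (w ^ 2 + c).im = 2 * w.re * w.im := by simp [sq]; ring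
  rw [mem_slitPlane_iff, hre, him]
  by_cases hwre : w.re = 0
  · left
    linarith [h hwre, sq_nonneg w.re]
  by_cases hwim : w.im = 0
  · left
    rw [hwim]
    linarith [sq_pos_of_ne_zero hwre]
  · right
    simp [hwre, hwim]

lemma add_sqrt_sq_add_ofReal_mem_slitPlane {w : ℂ} {c : ℝ} (hc : 0 < c)
    (hw : w ^ 2 + c ∈ slitPlane) : w + sqrt (w ^ 2 + c) ∈ slitPlane := by
  set s := sqrt (w ^ 2 + c)
  have hs : 0 < s.re := re_sqrt_pos hw
  rw [mem_slitPlane_iff]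
  by_contra! hv
  obtain ⟨hre, him⟩ := hv
  have key : 2 * (w + s) * s = (w + s) ^ 2 + c := by linear_combination sqrt_sq (w ^ 2 + c)
  have key_re : 2 * (w + s).re * s.re = (w + s).re ^ 2 + c := by
    simpa [sq, mul_re, him] using congrArg re key
  nlinarith

lemma hasDerivAt_add_sqrt_sq_add {w c : ℂ} (hw : w ^ 2 + c ∈ slitPlane) :
    HasDerivAt (fun x => x + sqrt (x ^ 2 + c)) ((w + sqrt (w ^ 2 + c)) / sqrt (w ^ 2 + c)) w := by
  have hs : sqrt (w ^ 2 + c) ≠ 0 := ne_zero_of_re_pos (re_sqrt_pos hw)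
  refine ((hasDerivAt_id' w).add
    ((hasDerivAt_sqrt' hw).comp w ((hasDerivAt_pow 2 w).add_const c))).congr_deriv ?_
  field_simp
  norm_num
  ring

end Complex

lemma HasDerivAt.clog_ofReal_div {f : ℂ → ℂ} {f' z : ℂ} {a : ℝ} (ha : 0 < a)
    (hf : HasDerivAt f f' z) (hz : f z ∈ slitPlane) :
    HasDerivAt (fun x => Complex.log (a / f x)) (-f' / f z) z := by
  have h0 := slitPlane_ne_zero hz
  have ha0 : (a : ℂ) ≠ 0 := ofReal_ne_zero.2 ha.ne'
  refine (((hasDerivAt_const z (a : ℂ)).div hf h0).clog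
    (ofReal_div_mem_slitPlane ha hz)).congr_deriv ?_
  simp only [Pi.div_apply]
  field_simp
  ring

theorem psiFun_hasDerivAt (α : ℝ) (hα : 0 < α) (z : ℂ)
    (hz : ¬ ∃ y : ℝ, z = -1 + Complex.I * (y : ℂ) ∧ 2 * α ≤ |y|) :
    HasDerivAt (psiFun α) (-1 / (2 * csqrt ((1 + z) ^ 2 + 4 * (α : ℂ) ^ 2))) z ∧
    (-1 / (2 * csqrt ((1 + z) ^ 2 + 4 * (α : ℂ) ^ 2))).re < 0 := by
  have hc : 4 * (α : ℂ) ^ 2 = ((4 * α ^ 2 : ℝ) : ℂ) := by push_cast; ring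
  have h2α : 2 * (α : ℂ) = ((2 * α : ℝ) : ℂ) := by push_cast; ring
  have hA : (1 + z) ^ 2 + ((4 * α ^ 2 : ℝ) : ℂ) ∈ slitPlane := by
    refine sq_add_ofReal_mem_slitPlane (by positivity) fun hre => ?_
    by_contra! hle
    refine hz ⟨(1 + z).im, ?_, ?_⟩
    · apply Complex.ext <;> simp at hre ⊢
      linarith
    · nlinarith [sq_abs (1 + z).im, abs_nonneg (1 + z).im]
  have hv := add_sqrt_sq_add_ofReal_mem_slitPlane (by positivity) hA
  have hψ := (HasDerivAt.clog_ofReal_div (by positivity : 0 < 2 * α)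
    ((hasDerivAt_add_sqrt_sq_add hA).comp_const_add 1 z) hv).const_mul (1 / 2 : ℂ)
  have hs := re_sqrt_pos hA
  unfold psiFun
  simp only [csqrt_eq_sqrt, hc, h2α]
  refine ⟨hψ.congr_deriv ?_, ?_⟩
  · have hv0 := slitPlane_ne_zero hv
    have hs0 := ne_zero_of_re_pos hs
    field_simp
  · rw [neg_div, neg_re, neg_lt_zero, one_div]
    exact inv_re_pos (by simpa using hs)
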